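/- arXiv:1404.5940 — 5 statements merged into one kernel-verified Lean document; each statement's English description precedes it below -/
import Mathlib

section
/- For positive semidefinite matrices ρ and σ and any real α ≥ 1, Tr((ρ + σ)^α) ≥ Tr(ρ^α) + Tr(σ^α). -/
open Matrix BigOperators Kronecker ComplexOrder

noncomputable def funCalc {n : Type*} [Fintype n] [DecidableEq n]
    (f : ℝ → ℝ) (A : Matrix n n ℂ) : Matrix n n ℂ :=
  if h : A.IsHermitian then
    (h.eigenvectorUnitary : Matrix n n ℂ) *
      Matrix.diagonal (fun i => (f (h.eigenvalues i) : ℂ)) *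
      star (h.eigenvectorUnitary : Matrix n n ℂ)
  else 0

/-- Matrix power via functional calculus. -/
noncomputable def mpow {n : Type*} [Fintype n] [DecidableEq n]
    (A : Matrix n n ℂ) (α : ℝ) : Matrix n n ℂ :=
  funCalc (fun x => x ^ α) A

/-- A density matrix: positive semidefinite with unit trace. -/
def IsDensity {n : Type*} [Fintype n] [DecidableEq n] (ρ : Matrix n n ℂ) : Prop :=
  ρ.PosSemidef ∧ ρ.trace = 1

/-- Partial trace over the second factor. -/
noncomputable def ptraceB {a b : Type*} [Fintype a] [Fintype b]
    (M : Matrix (a × b) (a × b) ℂ) : Matrix a a ℂ :=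
  Matrix.of fun i j => ∑ k : b, M (i, k) (j, k)

/-- Partial trace over the first factor. -/
noncomputable def ptraceA {a b : Type*} [Fintype a] [Fintype b]
    (M : Matrix (a × b) (a × b) ℂ) : Matrix b b ℂ :=
  Matrix.of fun i j => ∑ k : a, M (k, i) (k, j)

/-- Fidelity F(ρ,σ) = Tr √(√σ ρ √σ). -/
noncomputable def fid {n : Type*} [Fintype n] [DecidableEq n]
    (ρ σ : Matrix n n ℂ) : ℝ :=
  ((mpow (mpow σ (1/2) * ρ * mpow σ (1/2)) (1/2)).trace).re

/-- Outer product |ψ⟩⟨ψ|. -/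
noncomputable def outer {n : Type*} (ψ : n → ℂ) : Matrix n n ℂ :=
  Matrix.of fun i j => ψ i * star (ψ j)

/-- Separability of a bipartite state. -/
def IsSepState {a b : Type*} [Fintype a] [Fintype b] [DecidableEq a] [DecidableEq b]
    (σ : Matrix (a × b) (a × b) ℂ) : Prop :=
  ∃ (k : ℕ) (q : Fin k → ℝ) (τ : Fin k → Matrix a a ℂ) (ω : Fin k → Matrix b b ℂ),
    (∀ i, 0 ≤ q i) ∧ (∑ i, q i = 1) ∧ (∀ i, IsDensity (τ i)) ∧ (∀ i, IsDensity (ω i)) ∧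
    σ = ∑ i, (q i : ℂ) • (τ i ⊗ₖ ω i)

/-- von Neumann entropy (base 2). -/
noncomputable def vnEntropy {n : Type*} [Fintype n] [DecidableEq n]
    (τ : Matrix n n ℂ) : ℝ :=
  -(τ * funCalc (Real.logb 2) τ).trace.re

/-- Rényi entropy of order β (base 2), with the von Neumann limit at β = 1. -/
noncomputable def renyiEntropy {n : Type*} [Fintype n] [DecidableEq n]
    (β : ℝ) (τ : Matrix n n ℂ) : ℝ :=
  if β = 1 then vnEntropy τ else (1 / (1 - β)) * Real.logb 2 ((mpow τ β).trace.re)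

/-- Rényi relative entropy of order α (base 2). -/
noncomputable def renyiRel {n : Type*} [Fintype n] [DecidableEq n]
    (α : ℝ) (ρ σ : Matrix n n ℂ) : ℝ :=
  (1 / (α - 1)) * Real.logb 2 ((mpow ρ α * mpow σ (1 - α)).trace.re)

/-! For `f` convex on `[0, ∞)`, the quantity `∑ f(eigenvalues)` can only decrease when the
off-diagonal blocks of a Hermitian block matrix are deleted, since the diagonal of `Uᴴ N U` is a
doubly stochastic average of the eigenvalues of `N` (Peierls). For `M = [[√ρ, √σ], [0, 0]]` the
matrix `Mᴴ M` has diagonal blocks `ρ` and `σ` and the same spectrum as `M Mᴴ = (ρ + σ) ⊕ 0`, so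
`Tr f(ρ) + Tr f(σ) ≤ Tr f(ρ + σ) + n f(0)`, and `f(0) = 0` for `f x = x ^ α`. -/

open Polynomial

theorem ConvexOn.sum_comp_mulVec_le {ι : Type*} [Fintype ι] [DecidableEq ι] {s : Set ℝ}
    {f : ℝ → ℝ} (hf : ConvexOn ℝ s f) {M : Matrix ι ι ℝ} (hM : M ∈ doublyStochastic ℝ ι)
    {x : ι → ℝ} (hx : ∀ i, x i ∈ s) : ∑ i, f ((M *ᵥ x) i) ≤ ∑ i, f (x i) := by
  obtain ⟨hM0, hrow, hcol⟩ := mem_doublyStochastic_iff_sum.mp hM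
  calc ∑ i, f ((M *ᵥ x) i) ≤ ∑ i, ∑ j, M i j * f (x j) :=
        Finset.sum_le_sum fun i _ =>
          hf.map_sum_le (fun j _ => hM0 i j) (hrow i) (fun j _ => hx j)
    _ = ∑ j, f (x j) := by
        rw [Finset.sum_comm]
        simp only [← Finset.sum_mul, hcol, one_mul]

namespace Matrix

variable {ι κ : Type*} [Fintype ι] [DecidableEq ι] [Fintype κ] [DecidableEq κ]

theorem normSq_mem_doublyStochastic {U : Matrix ι ι ℂ} (hU : U ∈ unitaryGroup ι ℂ) :
    of (fun i j => Complex.normSq (U i j)) ∈ doublyStochastic ℝ ι := by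
  refine mem_doublyStochastic_iff_sum.mpr ⟨fun i j => Complex.normSq_nonneg _, fun i => ?_,
    fun j => ?_⟩
  · have h := congr_arg (fun A : Matrix ι ι ℂ => (A i i).re) (mem_unitaryGroup_iff.mp hU)
    simpa [mul_apply, Complex.re_sum, Complex.mul_conj] using h
  · have h := congr_arg (fun A : Matrix ι ι ℂ => (A j j).re) (mem_unitaryGroup_iff'.mp hU)
    simpa [mul_apply, Complex.re_sum, mul_comm, Complex.mul_conj] using h

theorem re_diag_mul_diagonal_mul_star (U : Matrix ι ι ℂ) (d : ι → ℝ) (i : ι) :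
    ((U * diagonal (RCLike.ofReal ∘ d : ι → ℂ) * star U) i i).re
      = (of (fun i j => Complex.normSq (U i j)) *ᵥ d) i := by
  rw [mul_apply, Complex.re_sum]
  simp only [mul_diagonal, star_apply, Function.comp_apply, mulVec, dotProduct, of_apply]
  refine Finset.sum_congr rfl fun j _ => ?_
  rw [mul_right_comm, RCLike.star_def, Complex.mul_conj, Complex.re_ofReal_mul]
  simp

theorem IsHermitian.sum_re_diag_star_mul_mul_le {A : Matrix ι ι ℂ} (hA : A.IsHermitian)
    {s : Set ℝ} {f : ℝ → ℝ} (hf : ConvexOn ℝ s f) (hs : ∀ i, hA.eigenvalues i ∈ s)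
    {U : Matrix ι ι ℂ} (hU : U ∈ unitaryGroup ι ℂ) :
    ∑ i, f ((star U * A * U) i i).re ≤ ∑ i, f (hA.eigenvalues i) := by
  set Q : Matrix ι ι ℂ := star U * hA.eigenvectorUnitary
  have hQ : Q ∈ unitaryGroup ι ℂ :=
    Submonoid.mul_mem _ (Unitary.star_mem hU) hA.eigenvectorUnitary.2
  have hconj : star U * A * U = Q * diagonal (RCLike.ofReal ∘ hA.eigenvalues) * star Q := by
    conv_lhs => rw [hA.spectral_theorem, Unitary.conjStarAlgAut_apply]
    simp only [Q, star_mul, star_star, Matrix.mul_assoc]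
  simp only [hconj, re_diag_mul_diagonal_mul_star]
  exact hf.sum_comp_mulVec_le (normSq_mem_doublyStochastic hQ) hs

theorem IsHermitian.re_star_eigenvectorUnitary_mul_mul_eigenvectorUnitary_apply_self
    {A : Matrix ι ι ℂ} (hA : A.IsHermitian) (i : ι) :
    ((star (hA.eigenvectorUnitary : Matrix ι ι ℂ) * A * hA.eigenvectorUnitary) i i).re
      = hA.eigenvalues i := by
  have h := hA.conjStarAlgAut_star_eigenvectorUnitary
  rw [Unitary.conjStarAlgAut_star_apply] at h
  simp [h]

theorem IsHermitian.sum_eigenvalues_eq_sum_roots {A : Matrix ι ι ℂ} (hA : A.IsHermitian)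
    (f : ℝ → ℝ) : ∑ i, f (hA.eigenvalues i) = (A.charpoly.roots.map (fun z => f z.re)).sum := by
  rw [hA.roots_charpoly_eq_eigenvalues, Multiset.map_map]
  rfl

theorem IsHermitian.sum_eigenvalues_eq_of_charpoly_eq {A : Matrix ι ι ℂ} {B : Matrix κ κ ℂ}
    (hA : A.IsHermitian) (hB : B.IsHermitian) (h : A.charpoly = B.charpoly) (f : ℝ → ℝ) :
    ∑ i, f (hA.eigenvalues i) = ∑ j, f (hB.eigenvalues j) := by
  rw [hA.sum_eigenvalues_eq_sum_roots, hB.sum_eigenvalues_eq_sum_roots, h]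

theorem IsHermitian.sum_eigenvalues_fromBlocks_zero {A : Matrix ι ι ℂ} (hA : A.IsHermitian)
    (hM : (Matrix.fromBlocks A 0 0 (0 : Matrix κ κ ℂ)).IsHermitian) (f : ℝ → ℝ) :
    ∑ k, f (hM.eigenvalues k) = ∑ i, f (hA.eigenvalues i) + Fintype.card κ • f 0 := by
  rw [hM.sum_eigenvalues_eq_sum_roots, hA.sum_eigenvalues_eq_sum_roots,
    charpoly_fromBlocks_zero₁₂, charpoly_zero,
    roots_mul (mul_ne_zero A.charpoly_monic.ne_zero (pow_ne_zero _ X_ne_zero)), roots_X_pow]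
  simp [Multiset.map_nsmul, Multiset.sum_nsmul]

theorem IsHermitian.sum_eigenvalues_add_sum_eigenvalues_le_fromBlocks {A : Matrix ι ι ℂ}
    {B : Matrix κ κ ℂ} {X : Matrix ι κ ℂ} {Y : Matrix κ ι ℂ} (hA : A.IsHermitian)
    (hB : B.IsHermitian) (hN : (Matrix.fromBlocks A X Y B).IsHermitian) {s : Set ℝ} {f : ℝ → ℝ}
    (hf : ConvexOn ℝ s f) (hs : ∀ k, hN.eigenvalues k ∈ s) :
    ∑ i, f (hA.eigenvalues i) + ∑ j, f (hB.eigenvalues j) ≤ ∑ k, f (hN.eigenvalues k) := by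
  set V : Matrix (ι ⊕ κ) (ι ⊕ κ) ℂ :=
    Matrix.fromBlocks hA.eigenvectorUnitary 0 0 hB.eigenvectorUnitary
  have hV : V ∈ unitaryGroup (ι ⊕ κ) ℂ := by
    rw [mem_unitaryGroup_iff', star_eq_conjTranspose, fromBlocks_conjTranspose,
      fromBlocks_multiply]
    simp [← star_eq_conjTranspose, ← fromBlocks_one]
  have h := hN.sum_re_diag_star_mul_mul_le hf hs hV
  rw [Fintype.sum_sum_type] at h
  convert h using 3
  all_goals simp only [V, star_eq_conjTranspose, fromBlocks_conjTranspose, fromBlocks_multiply,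
    fromBlocks_apply₁₁, fromBlocks_apply₂₂, conjTranspose_zero, Matrix.zero_mul, Matrix.mul_zero,
    add_zero, zero_add]
  all_goals simp only [← star_eq_conjTranspose,
    re_star_eigenvectorUnitary_mul_mul_eigenvectorUnitary_apply_self]

open scoped MatrixOrder in
theorem PosSemidef.sum_eigenvalues_add_le {A B : Matrix ι ι ℂ} (hA : A.PosSemidef)
    (hB : B.PosSemidef) {f : ℝ → ℝ} (hf : ConvexOn ℝ (Set.Ici 0) f) :
    ∑ i, f (hA.isHermitian.eigenvalues i) + ∑ i, f (hB.isHermitian.eigenvalues i)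
      ≤ ∑ i, f ((hA.add hB).isHermitian.eigenvalues i) + Fintype.card ι • f 0 := by
  set R := CFC.sqrt A
  set S := CFC.sqrt B
  have hR : Rᴴ = R := (CFC.sqrt_nonneg A).posSemidef.1
  have hS : Sᴴ = S := (CFC.sqrt_nonneg B).posSemidef.1
  have hRR : R * R = A := CFC.sqrt_mul_sqrt_self A hA.nonneg
  have hSS : S * S = B := CFC.sqrt_mul_sqrt_self B hB.nonneg
  set M : Matrix (ι ⊕ ι) (ι ⊕ ι) ℂ := Matrix.fromBlocks R S 0 0
  have hMM : Mᴴ * M = Matrix.fromBlocks A (R * S) (S * R) B := by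
    simp [M, fromBlocks_conjTranspose, fromBlocks_multiply, hR, hS, hRR, hSS]
  have hMM' : M * Mᴴ = Matrix.fromBlocks (A + B) 0 0 0 := by
    simp [M, fromBlocks_conjTranspose, fromBlocks_multiply, hR, hS, hRR, hSS]
  have hN := posSemidef_conjTranspose_mul_self M
  have hP := posSemidef_self_mul_conjTranspose M
  rw [hMM] at hN
  rw [hMM'] at hP
  calc _ ≤ ∑ k, f (hN.isHermitian.eigenvalues k) :=
        hA.isHermitian.sum_eigenvalues_add_sum_eigenvalues_le_fromBlocks hB.isHermitian
          hN.isHermitian hf hN.eigenvalues_nonneg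
    _ = ∑ k, f (hP.isHermitian.eigenvalues k) :=
        hN.isHermitian.sum_eigenvalues_eq_of_charpoly_eq hP.isHermitian
          (by rw [← hMM, ← hMM', charpoly_mul_comm]) f
    _ = _ := (hA.add hB).isHermitian.sum_eigenvalues_fromBlocks_zero hP.isHermitian f

end Matrix

theorem trace_funCalc_re {ι : Type*} [Fintype ι] [DecidableEq ι] (f : ℝ → ℝ)
    {A : Matrix ι ι ℂ} (hA : A.IsHermitian) :
    (funCalc f A).trace.re = ∑ i, f (hA.eigenvalues i) := by
  rw [funCalc, dif_pos hA, trace_mul_cycle, Unitary.coe_star_mul_self, one_mul, trace_diagonal,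
    Complex.re_sum]
  simp

theorem trace_rpow_add_ge {n : Type*} [Fintype n] [DecidableEq n]
    (ρ σ : Matrix n n ℂ) (hρ : ρ.PosSemidef) (hσ : σ.PosSemidef)
    (α : ℝ) (hα : 1 ≤ α) :
    (mpow ρ α).trace.re + (mpow σ α).trace.re ≤ (mpow (ρ + σ) α).trace.re := by
  have h := hρ.sum_eigenvalues_add_le hσ (convexOn_rpow hα)
  rw [Real.zero_rpow (by linarith), smul_zero, add_zero] at h
  simpa only [mpow, trace_funCalc_re _ hρ.isHermitian, trace_funCalc_re _ hσ.isHermitian,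
    trace_funCalc_re _ (hρ.add hσ).isHermitian] using h
end

section
/- Let ρ_1,…,ρ_m be density matrices, p a probability vector of length m, and α ∈ (1,2]. Then Tr((Σ_x p_x ρ_x)^α) ≥ Σ_x p_x^α Tr(ρ_x^α). -/
open Matrix BigOperators Kronecker ComplexOrder

/-! With ρ̄ = ∑ₓ pₓ ρₓ we have Tr ρ̄^α = ∑ₓ pₓ Tr (ρ̄^(α-1) ρₓ). Since pₓ ρₓ ≤ ρ̄ and t ↦ t^(α-1) is
operator monotone for 0 ≤ α - 1 ≤ 1 (Löwner–Heinz), ρ̄^(α-1) ≥ (pₓ ρₓ)^(α-1) = pₓ^(α-1) ρₓ^(α-1),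
and pairing with ρₓ ≥ 0 under the trace gives Tr (ρ̄^(α-1) ρₓ) ≥ pₓ^(α-1) Tr ρₓ^α. -/

namespace CFC

variable {A : Type*} [CStarAlgebra A] [PartialOrder A] [StarOrderedRing A]

lemma rpow_add_one {a : A} {y : ℝ} (hy : 0 ≤ y) (ha : 0 ≤ a := by cfc_tac) :
    a ^ (y + 1) = a ^ y * a := by
  have hcont := (NNReal.continuous_rpow_const hy).continuousOn (s := spectrum NNReal a)
  rw [rpow_def, rpow_def]
  nth_rw 3 [← cfc_id' NNReal a]
  rw [← cfc_mul ..]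
  exact cfc_congr fun x _ => NNReal.rpow_add_one' (by linarith) x

lemma smul_rpow {r : ℝ} {a : A} {y : ℝ} (hr : 0 ≤ r) (hy : 0 ≤ y) (ha : 0 ≤ a := by cfc_tac) :
    (r • a) ^ y = r ^ y • a ^ y := by
  have hcont := (Real.continuous_rpow_const hy).continuousOn (s := (r • ·) '' spectrum ℝ a)
  rw [rpow_eq_cfc_real (smul_nonneg hr ha), rpow_eq_cfc_real ha, ← cfc_comp_smul r _ a hcont,
    ← cfc_smul ..]
  exact cfc_congr fun x hx => Real.mul_rpow hr (spectrum_nonneg_of_nonneg ha hx)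

end CFC

open scoped Matrix.Norms.L2Operator MatrixOrder

namespace Matrix

variable {n : Type*} [Fintype n] [DecidableEq n]

lemma funCalc_eq_cfc (f : ℝ → ℝ) {A : Matrix n n ℂ} (hA : A.IsHermitian) :
    funCalc f A = cfc f A := by
  rw [funCalc, dif_pos hA, hA.cfc_eq, IsHermitian.cfc, Unitary.conjStarAlgAut_apply]
  rfl

lemma mpow_eq_rpow {A : Matrix n n ℂ} (hA : 0 ≤ A) (y : ℝ) : mpow A y = A ^ y := by
  rw [mpow, funCalc_eq_cfc _ hA.posSemidef.isHermitian, CFC.rpow_eq_cfc_real hA]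

section RCLike

variable {𝕜 : Type*} [RCLike 𝕜]

lemma trace_mul_nonneg {A B : Matrix n n 𝕜} (hA : 0 ≤ A) (hB : 0 ≤ B) : 0 ≤ (A * B).trace := by
  have hS : (CFC.sqrt B)ᴴ = CFC.sqrt B := (CFC.sqrt_nonneg B).isSelfAdjoint.star_eq
  rw [← CFC.sqrt_mul_sqrt_self B hB, ← Matrix.mul_assoc, trace_mul_cycle]
  simpa only [hS] using (hA.posSemidef.mul_mul_conjTranspose_same (CFC.sqrt B)).trace_nonneg

lemma trace_mul_le_trace_mul {A B C : Matrix n n 𝕜} (hAB : A ≤ B) (hC : 0 ≤ C) :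
    (A * C).trace ≤ (B * C).trace := by
  rw [← sub_nonneg, ← trace_sub, ← Matrix.sub_mul]
  exact trace_mul_nonneg (sub_nonneg.mpr hAB) hC

end RCLike

lemma rpow_mul_re_trace_rpow_le_of_smul_le {r y : ℝ} {A B : Matrix n n ℂ} (hr : 0 ≤ r)
    (hA : 0 ≤ A) (hAB : r • A ≤ B) (hy₁ : 1 ≤ y) (hy₂ : y ≤ 2) :
    r ^ y * (A ^ y).trace.re ≤ r * (B ^ (y - 1) * A).trace.re := by
  have hy : 0 ≤ y - 1 := by linarith
  have hmono := trace_mul_le_trace_mul (CFC.rpow_le_rpow ⟨hy, by linarith⟩ hAB) hA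
  rw [CFC.smul_rpow hr hy, smul_mul_assoc, trace_smul, ← CFC.rpow_add_one hy, sub_add_cancel]
    at hmono
  calc r ^ y * (A ^ y).trace.re = r * (r ^ (y - 1) * (A ^ y).trace.re) := by
        rw [← mul_assoc, ← Real.rpow_one_add' hr (by linarith), add_sub_cancel]
    _ ≤ r * (B ^ (y - 1) * A).trace.re :=
        mul_le_mul_of_nonneg_left (by simpa using Complex.re_le_re hmono) hr

end Matrix

theorem trace_rpow_mix_ge_general {n : Type*} [Fintype n] [DecidableEq n] {m : ℕ}
    (ρ : Fin m → Matrix n n ℂ) (hρ : ∀ x, IsDensity (ρ x))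
    (p : Fin m → ℝ) (hp : ∀ x, 0 ≤ p x)
    (α : ℝ) (hα1 : 1 < α) (hα2 : α ≤ 2) :
    ∑ x, p x ^ α * (mpow (ρ x) α).trace.re
      ≤ (mpow (∑ x, (p x : ℂ) • ρ x) α).trace.re := by
  simp_rw [Complex.coe_smul]
  set ρb := ∑ x, p x • ρ x
  have hρ₀ : ∀ x, 0 ≤ ρ x := fun x => (hρ x).1.nonneg
  have hterm : ∀ x ∈ Finset.univ, 0 ≤ p x • ρ x := fun x _ => smul_nonneg (hp x) (hρ₀ x)
  have hb : 0 ≤ ρb := Finset.sum_nonneg hterm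
  simp only [mpow_eq_rpow, hρ₀, hb]
  calc ∑ x, p x ^ α * ((ρ x) ^ α).trace.re
      ≤ ∑ x, p x * (ρb ^ (α - 1) * ρ x).trace.re :=
        Finset.sum_le_sum fun x hx => rpow_mul_re_trace_rpow_le_of_smul_le (hp x) (hρ₀ x)
          (Finset.single_le_sum hterm hx) hα1.le hα2
    _ = (ρb ^ (α - 1) * ρb).trace.re := by
        simp only [ρb, Finset.mul_sum, mul_smul_comm, trace_sum, trace_smul, Complex.re_sum,
          Complex.smul_re, smul_eq_mul]
    _ = (ρb ^ α).trace.re := by rw [← CFC.rpow_add_one (by linarith) hb, sub_add_cancel]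

theorem trace_rpow_mix_ge {n : Type*} [Fintype n] [DecidableEq n] {m : ℕ}
    (ρ : Fin m → Matrix n n ℂ) (hρ : ∀ x, IsDensity (ρ x))
    (p : Fin m → ℝ) (hp : ∀ x, 0 ≤ p x) (hp1 : ∑ x, p x = 1)
    (α : ℝ) (hα1 : 1 < α) (hα2 : α ≤ 2) :
    ∑ x, p x ^ α * (mpow (ρ x) α).trace.re
      ≤ (mpow (∑ x, (p x : ℂ) • ρ x) α).trace.re :=
  trace_rpow_mix_ge_general ρ hρ p hp α hα1 hα2
end

section
/- Let ρ_1,…,ρ_m be density matrices, p a probability vector of length m, and α ∈ (1,2]. Then m^{α−1} · Σ_x p_x^α Tr(ρ_x^α) ≥ Tr((Σ_x p_x ρ_x)^α). -/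
open Matrix BigOperators Kronecker ComplexOrder

/-! Diagonalise `σ = ∑ₓ pₓ ρₓ` in an orthonormal eigenbasis `(uᵢ)`. Its eigenvalues are
`λᵢ = ∑ₓ pₓ qₓᵢ` with `qₓᵢ = ⟨uᵢ, ρₓ uᵢ⟩ ≥ 0`, so the power-mean inequality gives
`λᵢ^α ≤ m^(α-1) ∑ₓ pₓ^α qₓᵢ^α`. The diagonal `(qₓᵢ)ᵢ` of `ρₓ` is the image of its spectrum under
the doubly stochastic matrix `(|⟨uᵢ, vⱼ⟩|²)`, where `(vⱼ)` is an eigenbasis of `ρₓ`, so convexity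
of `t ↦ t^α` gives `∑ᵢ qₓᵢ^α ≤ Tr ρₓ^α`. -/

open Matrix in
lemma ConvexOn.sum_map_mulVec_le {n : Type*} [Fintype n] [DecidableEq n] {s : Set ℝ}
    {f : ℝ → ℝ} (hf : ConvexOn ℝ s f) {D : Matrix n n ℝ} (hD : D ∈ doublyStochastic ℝ n)
    {v : n → ℝ} (hv : ∀ j, v j ∈ s) :
    ∑ i, f ((D *ᵥ v) i) ≤ ∑ j, f (v j) := by
  calc ∑ i, f ((D *ᵥ v) i) ≤ ∑ i, ∑ j, D i j * f (v j) := by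
        gcongr with i
        exact hf.map_sum_le (fun j _ => nonneg_of_mem_doublyStochastic hD)
          (sum_row_of_mem_doublyStochastic hD i) (fun j _ => hv j)
    _ = ∑ j, f (v j) := by
        rw [Finset.sum_comm]
        simp [← Finset.sum_mul, sum_col_of_mem_doublyStochastic hD]

section

variable {n : Type*} [Fintype n] [DecidableEq n]

lemma Matrix.sum_normSq_row_of_mem_unitaryGroup {M : Matrix n n ℂ}
    (hM : M ∈ unitaryGroup n ℂ) (i : n) : ∑ j, Complex.normSq (M i j) = 1 := by
  have h := congrFun (congrFun (mem_unitaryGroup_iff.mp hM) i) i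
  rw [mul_apply, one_apply_eq] at h
  exact_mod_cast (by simpa [Complex.mul_conj] using h :
    ((∑ j, Complex.normSq (M i j) : ℝ) : ℂ) = 1)

lemma Matrix.map_normSq_mem_doublyStochastic {M : Matrix n n ℂ} (hM : M ∈ unitaryGroup n ℂ) :
    M.map Complex.normSq ∈ doublyStochastic ℝ n := by
  refine mem_doublyStochastic_iff_sum.mpr ⟨fun i j => Complex.normSq_nonneg _,
    sum_normSq_row_of_mem_unitaryGroup hM, fun j => ?_⟩
  simpa using sum_normSq_row_of_mem_unitaryGroup (Unitary.star_mem hM) j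

lemma Matrix.mul_diagonal_mul_star_apply_self (M : Matrix n n ℂ) (d : n → ℝ) (i : n) :
    (M * diagonal (Complex.ofReal ∘ d) * star M) i i = ((M.map Complex.normSq *ᵥ d) i : ℝ) := by
  rw [mul_apply, mulVec, dotProduct, Complex.ofReal_sum]
  refine Finset.sum_congr rfl fun j _ => ?_
  rw [mul_diagonal, star_apply, RCLike.star_def, mul_right_comm, Complex.mul_conj]
  simp [mul_comm]

lemma Matrix.re_conj_sum_smul_apply_self {ι : Type*} (s : Finset ι) (W : Matrix n n ℂ)
    (p : ι → ℝ) (ρ : ι → Matrix n n ℂ) (i : n) :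
    ((star W * (∑ x ∈ s, (p x : ℂ) • ρ x) * W) i i).re =
      ∑ x ∈ s, p x * ((star W * ρ x * W) i i).re := by
  simp only [Finset.mul_sum, Finset.sum_mul, mul_smul_comm, smul_mul_assoc, sum_apply, smul_apply,
    smul_eq_mul, Complex.re_sum, Complex.re_ofReal_mul]

lemma Matrix.IsHermitian.eigenvalues_eq_re_conj_eigenvectorUnitary_apply_self
    {A : Matrix n n ℂ} (hA : A.IsHermitian) (i : n) :
    hA.eigenvalues i =
      ((star (hA.eigenvectorUnitary : Matrix n n ℂ) * A * hA.eigenvectorUnitary) i i).re := by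
  have h := hA.conjStarAlgAut_star_eigenvectorUnitary
  simp only [Unitary.conjStarAlgAut_apply, Unitary.coe_star, star_star] at h
  simp [h]

lemma re_trace_funCalc {A : Matrix n n ℂ} (hA : A.IsHermitian) (f : ℝ → ℝ) :
    (funCalc f A).trace.re = ∑ i, f (hA.eigenvalues i) := by
  rw [funCalc, dif_pos hA, trace_mul_cycle, Unitary.coe_star_mul_self, one_mul, trace_diagonal,
    Complex.re_sum]
  simp

theorem Matrix.IsHermitian.sum_map_re_conj_apply_self_le_re_trace_funCalc {A : Matrix n n ℂ}
    (hA : A.IsHermitian) {W : Matrix n n ℂ} (hW : W ∈ unitaryGroup n ℂ) {s : Set ℝ}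
    {f : ℝ → ℝ} (hf : ConvexOn ℝ s f) (hs : ∀ j, hA.eigenvalues j ∈ s) :
    ∑ i, f ((star W * A * W) i i).re ≤ (funCalc f A).trace.re := by
  set U : Matrix n n ℂ := ↑hA.eigenvectorUnitary
  have hM : star W * U ∈ unitaryGroup n ℂ :=
    mul_mem (Unitary.star_mem hW) hA.eigenvectorUnitary.2
  have hconj : star W * A * W =
      (star W * U) * diagonal (Complex.ofReal ∘ hA.eigenvalues) * star (star W * U) := by
    conv_lhs => rw [hA.spectral_theorem]
    simp [U, star_mul, mul_assoc]
  simp_rw [re_trace_funCalc hA, hconj, mul_diagonal_mul_star_apply_self, Complex.ofReal_re]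
  exact hf.sum_map_mulVec_le (map_normSq_mem_doublyStochastic hM) hs

end

theorem trace_rpow_mix_le_general {n : Type*} [Fintype n] [DecidableEq n] {m : ℕ}
    (ρ : Fin m → Matrix n n ℂ) (hρ : ∀ x, IsDensity (ρ x))
    (p : Fin m → ℝ) (hp : ∀ x, 0 ≤ p x)
    (α : ℝ) (hα1 : 1 < α) :
    (mpow (∑ x, (p x : ℂ) • ρ x) α).trace.re
      ≤ (m : ℝ) ^ (α - 1) * ∑ x, p x ^ α * (mpow (ρ x) α).trace.re := by
  set σ := ∑ x, (p x : ℂ) • ρ x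
  have hσ : σ.IsHermitian := (posSemidef_sum _ fun x _ =>
    (hρ x).1.smul (Complex.zero_le_real.mpr (hp x))).isHermitian
  set U : Matrix n n ℂ := ↑hσ.eigenvectorUnitary
  set q : Fin m → n → ℝ := fun x i => ((star U * ρ x * U) i i).re
  have hq : ∀ x i, 0 ≤ q x i := fun x i =>
    (Complex.nonneg_iff.mp ((hρ x).1.conjTranspose_mul_mul_same U).diag_nonneg).1
  have hσ_eig : ∀ i, hσ.eigenvalues i = ∑ x, p x * q x i := fun i => by
    rw [hσ.eigenvalues_eq_re_conj_eigenvectorUnitary_apply_self, re_conj_sum_smul_apply_self]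
  have hρ_maj : ∀ x, ∑ i, q x i ^ α ≤ (mpow (ρ x) α).trace.re := fun x =>
    (hρ x).1.isHermitian.sum_map_re_conj_apply_self_le_re_trace_funCalc
      hσ.eigenvectorUnitary.2 (convexOn_rpow hα1.le) (hρ x).1.eigenvalues_nonneg
  calc (mpow σ α).trace.re = ∑ i, (∑ x, p x * q x i) ^ α := by
        simp only [mpow, re_trace_funCalc hσ, hσ_eig]
    _ ≤ ∑ i, (m : ℝ) ^ (α - 1) * ∑ x, (p x * q x i) ^ α := by
        gcongr with i
        simpa using Real.rpow_sum_le_const_mul_sum_rpow_of_nonneg Finset.univ hα1.le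
          (fun x _ => mul_nonneg (hp x) (hq x i))
    _ = (m : ℝ) ^ (α - 1) * ∑ x, p x ^ α * ∑ i, q x i ^ α := by
        simp only [Real.mul_rpow (hp _) (hq _ _), Finset.mul_sum]
        rw [Finset.sum_comm]
    _ ≤ (m : ℝ) ^ (α - 1) * ∑ x, p x ^ α * (mpow (ρ x) α).trace.re := by
        gcongr with x
        · exact Real.rpow_nonneg (hp x) α
        · exact hρ_maj x

theorem trace_rpow_mix_le {n : Type*} [Fintype n] [DecidableEq n] {m : ℕ}
    (ρ : Fin m → Matrix n n ℂ) (hρ : ∀ x, IsDensity (ρ x))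
    (p : Fin m → ℝ) (hp : ∀ x, 0 ≤ p x) (hp1 : ∑ x, p x = 1)
    (α : ℝ) (hα1 : 1 < α) (hα2 : α ≤ 2) :
    (mpow (∑ x, (p x : ℂ) • ρ x) α).trace.re
      ≤ (m : ℝ) ^ (α - 1) * ∑ x, p x ^ α * (mpow (ρ x) α).trace.re :=
  trace_rpow_mix_le_general ρ hρ p hp α hα1
end

section
/- Let ρ_1,…,ρ_m be density matrices, p a probability vector, and α > 1. Then Σ_x p_x (Tr ρ_x^α)^{1/α} ≤ m^{(α−1)/α} · (Tr((Σ_x p_x ρ_x)^α))^{1/α}. -/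
open Matrix BigOperators Kronecker ComplexOrder

/-!
Write `σ = ∑ₓ pₓ ρₓ`. Since `pₓ ρₓ ≤ σ`, McCarthy's inequality `∑ₓ Tr (pₓ ρₓ)^α ≤ Tr σ^α` follows
from `Tr A^α ≤ Tr (A σ^(α-1))` for `0 ≤ A ≤ σ`, which is checked on each eigenvector `u` of `A`
with eigenvalue `λ`: `λ^β ≤ ⟪u, σ^β u⟫` for `β = α - 1`. For `β ≤ 1` this is the operator
monotonicity of `t ↦ t^β` (Löwner–Heinz); for `β ≥ 1` it is Jensen's inequality for the state
`⟪u, · u⟫`, since `λ = ⟪u, A u⟫ ≤ ⟪u, σ u⟫`. The power-mean inequality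
`(∑ₓ aₓ)^α ≤ m^(α-1) ∑ₓ aₓ^α` then turns McCarthy's inequality into the claim.
-/

lemma Real.add_mul_sub_le_rpow {β c t : ℝ} (hβ : 1 ≤ β) (hc : 0 < c) (ht : 0 ≤ t) :
    c ^ β + β * c ^ (β - 1) * (t - c) ≤ t ^ β := by
  have h := one_add_mul_self_le_rpow_one_add (s := t / c - 1)
    (by linarith [div_nonneg ht hc.le]) hβ
  rw [add_sub_cancel, Real.div_rpow ht hc.le, le_div_iff₀ (Real.rpow_pos_of_pos hc β)] at h
  calc c ^ β + β * c ^ (β - 1) * (t - c) = (1 + β * (t / c - 1)) * c ^ β := by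
        rw [Real.rpow_sub_one hc.ne']
        field_simp
    _ ≤ t ^ β := h

section Jensen

variable {A : Type*} [Ring A] [StarRing A] [PartialOrder A] [StarOrderedRing A]
  [TopologicalSpace A] [Algebra ℝ A] [ContinuousFunctionalCalculus ℝ A IsSelfAdjoint]
  [NonnegSpectrumClass ℝ A]

lemma rpow_map_le_map_cfc_rpow (φ : A →ₗ[ℝ] ℝ) (hφ : Monotone φ) (hφ1 : φ 1 = 1) {a : A}
    (ha : 0 ≤ a) {β : ℝ} (hβ : 1 ≤ β) : φ a ^ β ≤ φ (cfc (fun t : ℝ => t ^ β) a) := by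
  have hspec : ∀ x ∈ spectrum ℝ a, 0 ≤ x := fun x hx => spectrum_nonneg_of_nonneg ha hx
  obtain hc | hc := (show 0 ≤ φ a by simpa using hφ ha).eq_or_lt
  · rw [← hc, Real.zero_rpow (by linarith)]
    simpa using hφ (cfc_nonneg fun x hx => Real.rpow_nonneg (hspec x hx) β)
  set c := φ a
  set k := β * c ^ (β - 1)
  -- the supporting line of `t ↦ t ^ β` at `c`
  have hline : algebraMap ℝ A (c ^ β - k * c) + k • a ≤ cfc (fun t : ℝ => t ^ β) a := by
    rw [← cfc_const_mul_id k a, ← cfc_const (c ^ β - k * c) a,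
      ← cfc_add (a := a) (fun _ => c ^ β - k * c) (k * ·)]
    exact cfc_mono (fun x hx => by linarith [Real.add_mul_sub_le_rpow hβ hc (hspec x hx)])
      (hg := (Real.continuous_rpow_const (by linarith)).continuousOn)
  calc c ^ β = φ (algebraMap ℝ A (c ^ β - k * c) + k • a) := by
        rw [map_add, map_smul, Algebra.algebraMap_eq_smul_one, map_smul, hφ1, smul_eq_mul,
          smul_eq_mul]
        ring
    _ ≤ _ := hφ hline

end Jensen

lemma Real.sum_le_card_rpow_mul_sum_rpow_rpow_one_div {ι : Type*} (s : Finset ι) {f : ι → ℝ}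
    (hf : ∀ i ∈ s, 0 ≤ f i) {p : ℝ} (hp : 1 ≤ p) :
    ∑ i ∈ s, f i ≤ (s.card : ℝ) ^ ((p - 1) / p) * (∑ i ∈ s, f i ^ p) ^ (1 / p) := by
  have hp0 : p ≠ 0 := by linarith
  have hsum : 0 ≤ ∑ i ∈ s, f i := Finset.sum_nonneg hf
  calc ∑ i ∈ s, f i = ((∑ i ∈ s, f i) ^ p) ^ (1 / p) := by
        rw [← Real.rpow_mul hsum, mul_one_div_cancel hp0, Real.rpow_one]
    _ ≤ ((s.card : ℝ) ^ (p - 1) * ∑ i ∈ s, f i ^ p) ^ (1 / p) :=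
        Real.rpow_le_rpow (by positivity) (Real.rpow_sum_le_const_mul_sum_rpow_of_nonneg s hp hf)
          (by positivity)
    _ = _ := by
        rw [Real.mul_rpow (by positivity)
          (Finset.sum_nonneg fun i hi => Real.rpow_nonneg (hf i hi) p),
          ← Real.rpow_mul (Nat.cast_nonneg _), mul_one_div]

section

open scoped MatrixOrder

variable {n : Type*} [Fintype n] [DecidableEq n]

lemma funCalc_eq_cfc {A : Matrix n n ℂ} (hA : A.IsHermitian) (f : ℝ → ℝ) :
    funCalc f A = cfc f A := by
  rw [hA.cfc_eq, IsHermitian.cfc, funCalc, dif_pos hA, Unitary.conjStarAlgAut_apply]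
  rfl

lemma mpow_eq_cfc {A : Matrix n n ℂ} (hA : A.IsHermitian) (α : ℝ) :
    mpow A α = cfc (fun t : ℝ => t ^ α) A :=
  funCalc_eq_cfc hA _

namespace Matrix

open scoped Norms.L2Operator in
lemma cfc_rpow_le_cfc_rpow {A B : Matrix n n ℂ} (hA : 0 ≤ A) (hAB : A ≤ B) {β : ℝ}
    (hβ : β ∈ Set.Icc (0 : ℝ) 1) :
    cfc (fun t : ℝ => t ^ β) A ≤ cfc (fun t : ℝ => t ^ β) B := by
  rw [← CFC.rpow_eq_cfc_real hA, ← CFC.rpow_eq_cfc_real (hA.trans hAB)]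
  exact CFC.rpow_le_rpow hβ hAB

namespace IsHermitian

variable {A : Matrix n n ℂ} (hA : A.IsHermitian)

noncomputable def eigenvectorState (i : n) : Matrix n n ℂ →ₗ[ℝ] ℝ where
  toFun X := ((star (hA.eigenvectorUnitary : Matrix n n ℂ) * X * hA.eigenvectorUnitary) i i).re
  map_add' X Y := by simp [Matrix.mul_add, Matrix.add_mul]
  map_smul' r X := by simp

lemma eigenvectorState_apply (i : n) (X : Matrix n n ℂ) :
    hA.eigenvectorState i X =
      ((star (hA.eigenvectorUnitary : Matrix n n ℂ) * X * hA.eigenvectorUnitary) i i).re :=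
  rfl

lemma monotone_eigenvectorState (i : n) : Monotone (hA.eigenvectorState i) := by
  intro X Y hXY
  have h := ((le_iff.1 hXY).conjTranspose_mul_mul_same
    (hA.eigenvectorUnitary : Matrix n n ℂ)).diag_nonneg (i := i)
  rw [← star_eq_conjTranspose, Matrix.mul_sub, Matrix.sub_mul, sub_apply] at h
  simpa [eigenvectorState_apply] using (Complex.le_def.1 h).1

lemma eigenvectorState_one (i : n) : hA.eigenvectorState i 1 = 1 := by
  simp [eigenvectorState_apply]

lemma eigenvectorState_cfc (f : ℝ → ℝ) (i : n) :
    hA.eigenvectorState i (cfc f A) = f (hA.eigenvalues i) := by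
  simp only [eigenvectorState_apply, hA.cfc_eq, IsHermitian.cfc, Unitary.conjStarAlgAut_apply,
    ← Matrix.mul_assoc, SetLike.coe_mem, Unitary.star_mul_self_of_mem, one_mul]
  simp [Matrix.mul_assoc]

lemma eigenvectorState_self (i : n) : hA.eigenvectorState i A = hA.eigenvalues i := by
  simpa [cfc_id' ℝ A] using hA.eigenvectorState_cfc (fun x => x) i

lemma re_trace_cfc_mul (f : ℝ → ℝ) (M : Matrix n n ℂ) :
    (cfc f A * M).trace.re = ∑ i, f (hA.eigenvalues i) * hA.eigenvectorState i M := by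
  rw [hA.cfc_eq, IsHermitian.cfc, Unitary.conjStarAlgAut_apply, Matrix.mul_assoc,
    Matrix.mul_assoc, trace_mul_comm, Matrix.mul_assoc, trace, Complex.re_sum]
  simp [eigenvectorState_apply, diagonal_mul, Matrix.mul_assoc]

end IsHermitian

namespace PosSemidef

variable {A B : Matrix n n ℂ} (hA : A.PosSemidef)
include hA

lemma eigenvalues_rpow_le_eigenvectorState (hAB : A ≤ B) {β : ℝ} (hβ : 0 ≤ β) (i : n) :
    hA.isHermitian.eigenvalues i ^ β ≤
      hA.isHermitian.eigenvectorState i (cfc (fun t : ℝ => t ^ β) B) := by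
  obtain hβ1 | hβ1 := le_total β 1
  · rw [← hA.isHermitian.eigenvectorState_cfc (· ^ β)]
    exact hA.isHermitian.monotone_eigenvectorState i
      (cfc_rpow_le_cfc_rpow hA.nonneg hAB ⟨hβ, hβ1⟩)
  · calc hA.isHermitian.eigenvalues i ^ β = hA.isHermitian.eigenvectorState i A ^ β := by
          rw [hA.isHermitian.eigenvectorState_self]
      _ ≤ hA.isHermitian.eigenvectorState i B ^ β :=
          Real.rpow_le_rpow (hA.isHermitian.eigenvectorState_self i ▸ hA.eigenvalues_nonneg i)
            (hA.isHermitian.monotone_eigenvectorState i hAB) hβ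
      _ ≤ _ := rpow_map_le_map_cfc_rpow _ (hA.isHermitian.monotone_eigenvectorState i)
            (hA.isHermitian.eigenvectorState_one i) (hA.nonneg.trans hAB) hβ1

lemma re_trace_cfc_rpow_le_re_trace_mul (hAB : A ≤ B) {α : ℝ} (hα : 1 ≤ α) :
    (cfc (fun t : ℝ => t ^ α) A).trace.re ≤
      (A * cfc (fun t : ℝ => t ^ (α - 1)) B).trace.re := by
  have hev := hA.eigenvalues_nonneg
  calc (cfc (fun t : ℝ => t ^ α) A).trace.re
      = ∑ i, hA.isHermitian.eigenvalues i * hA.isHermitian.eigenvalues i ^ (α - 1) := by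
        rw [← mul_one (cfc _ A), hA.isHermitian.re_trace_cfc_mul]
        refine Finset.sum_congr rfl fun i _ => ?_
        rw [IsHermitian.eigenvectorState_one, mul_one, ← Real.rpow_one_add' (hev i) (by linarith),
          add_sub_cancel]
    _ ≤ ∑ i, hA.isHermitian.eigenvalues i *
          hA.isHermitian.eigenvectorState i (cfc (fun t : ℝ => t ^ (α - 1)) B) :=
        Finset.sum_le_sum fun i _ => mul_le_mul_of_nonneg_left
          (hA.eigenvalues_rpow_le_eigenvectorState hAB (by linarith) i) (hev i)
    _ = (A * cfc (fun t : ℝ => t ^ (α - 1)) B).trace.re := by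
        simpa [cfc_id' ℝ A] using (hA.isHermitian.re_trace_cfc_mul (fun x => x) _).symm

lemma re_trace_cfc_rpow_nonneg (α : ℝ) : 0 ≤ (cfc (fun t : ℝ => t ^ α) A).trace.re :=
  (Complex.le_def.1 (cfc_nonneg fun _ hx => Real.rpow_nonneg
    (spectrum_nonneg_of_nonneg hA.nonneg hx) α).posSemidef.trace_nonneg).1

lemma re_trace_cfc_rpow_smul {r : ℝ} (hr : 0 ≤ r) (α : ℝ) :
    (cfc (fun t : ℝ => t ^ α) (r • A)).trace.re =
      r ^ α * (cfc (fun t : ℝ => t ^ α) A).trace.re := by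
  have h : cfc (fun t : ℝ => t ^ α) (r • A) = r ^ α • cfc (fun t : ℝ => t ^ α) A := by
    rw [← cfc_comp_smul r _ A ((finite_real_spectrum.image _).continuousOn _),
      ← cfc_const_mul _ _ A (finite_real_spectrum.continuousOn _)]
    exact cfc_congr fun x hx => Real.mul_rpow hr (spectrum_nonneg_of_nonneg hA.nonneg hx)
  rw [h, trace_smul, Complex.smul_re, smul_eq_mul]

end PosSemidef

lemma sum_re_trace_cfc_rpow_le {ι : Type*} [Fintype ι] (A : ι → Matrix n n ℂ)
    (hA : ∀ x, (A x).PosSemidef) {α : ℝ} (hα : 1 ≤ α) :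
    ∑ x, (cfc (fun t : ℝ => t ^ α) (A x)).trace.re ≤
      (cfc (fun t : ℝ => t ^ α) (∑ x, A x)).trace.re := by
  set S := ∑ x, A x
  have hAS : ∀ x, A x ≤ S := fun x =>
    Finset.single_le_sum (fun y _ => (hA y).nonneg) (Finset.mem_univ x)
  calc ∑ x, (cfc (fun t : ℝ => t ^ α) (A x)).trace.re
      ≤ ∑ x, (A x * cfc (fun t : ℝ => t ^ (α - 1)) S).trace.re :=
        Finset.sum_le_sum fun x _ => (hA x).re_trace_cfc_rpow_le_re_trace_mul (hAS x) hα
    _ = (S * cfc (fun t : ℝ => t ^ (α - 1)) S).trace.re := by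
        rw [Finset.sum_mul, trace_sum, Complex.re_sum]
    _ = (cfc (fun t : ℝ => t ^ α) S).trace.re := by
        have hS : 0 ≤ S := Finset.sum_nonneg fun x _ => (hA x).nonneg
        nth_rewrite 1 [← cfc_id' ℝ S hS.isSelfAdjoint]
        rw [← cfc_mul _ _ S (hg := (Real.continuous_rpow_const (by linarith)).continuousOn)]
        refine congrArg _ (congrArg _ (cfc_congr fun t ht => ?_))
        rw [← Real.rpow_one_add' (spectrum_nonneg_of_nonneg hS ht) (by linarith), add_sub_cancel]

lemma sum_re_trace_cfc_rpow_rpow_le {ι : Type*} [Fintype ι] (A : ι → Matrix n n ℂ)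
    (hA : ∀ x, (A x).PosSemidef) {α : ℝ} (hα : 1 ≤ α) :
    ∑ x, (cfc (fun t : ℝ => t ^ α) (A x)).trace.re ^ (1 / α) ≤
      (Fintype.card ι : ℝ) ^ ((α - 1) / α) *
        (cfc (fun t : ℝ => t ^ α) (∑ x, A x)).trace.re ^ (1 / α) := by
  have hT : ∀ x, 0 ≤ (cfc (fun t : ℝ => t ^ α) (A x)).trace.re := fun x =>
    (hA x).re_trace_cfc_rpow_nonneg α
  calc ∑ x, (cfc (fun t : ℝ => t ^ α) (A x)).trace.re ^ (1 / α)
      ≤ (Fintype.card ι : ℝ) ^ ((α - 1) / α) *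
          (∑ x, ((cfc (fun t : ℝ => t ^ α) (A x)).trace.re ^ (1 / α)) ^ α) ^ (1 / α) := by
        simpa using Real.sum_le_card_rpow_mul_sum_rpow_rpow_one_div Finset.univ
          (fun x _ => Real.rpow_nonneg (hT x) _) hα
    _ = (Fintype.card ι : ℝ) ^ ((α - 1) / α) *
          (∑ x, (cfc (fun t : ℝ => t ^ α) (A x)).trace.re) ^ (1 / α) := by
        simp_rw [← Real.rpow_mul (hT _), one_div_mul_cancel (by linarith : α ≠ 0), Real.rpow_one]
    _ ≤ _ := by
        gcongr
        exacts [Finset.sum_nonneg fun x _ => hT x, sum_re_trace_cfc_rpow_le A hA hα]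

end Matrix

end

theorem sum_trace_rpow_le_general {n : Type*} [Fintype n] [DecidableEq n] {m : ℕ}
    (ρ : Fin m → Matrix n n ℂ) (hρ : ∀ x, IsDensity (ρ x))
    (p : Fin m → ℝ) (hp : ∀ x, 0 ≤ p x)
    (α : ℝ) (hα : 1 < α) :
    ∑ x, p x * ((mpow (ρ x) α).trace.re) ^ (1 / α)
      ≤ (m : ℝ) ^ ((α - 1) / α) * ((mpow (∑ x, (p x : ℂ) • ρ x) α).trace.re) ^ (1 / α) := by
  have hpρ : ∀ x, (p x • ρ x).PosSemidef := fun x => (hρ x).1.smul (hp x)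
  have hscale : ∀ x, p x * ((mpow (ρ x) α).trace.re) ^ (1 / α) =
      ((cfc (fun t : ℝ => t ^ α) (p x • ρ x)).trace.re) ^ (1 / α) := fun x => by
    rw [mpow_eq_cfc (hρ x).1.isHermitian, (hρ x).1.re_trace_cfc_rpow_smul (hp x),
      Real.mul_rpow (Real.rpow_nonneg (hp x) α) ((hρ x).1.re_trace_cfc_rpow_nonneg α),
      ← Real.rpow_mul (hp x), mul_one_div_cancel (by linarith : α ≠ 0), Real.rpow_one]
  simp_rw [hscale, Complex.coe_smul]
  rw [mpow_eq_cfc (posSemidef_sum _ fun x _ => hpρ x).isHermitian]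
  simpa using Matrix.sum_re_trace_cfc_rpow_rpow_le _ hpρ hα.le

theorem sum_trace_rpow_le {n : Type*} [Fintype n] [DecidableEq n] {m : ℕ}
    (ρ : Fin m → Matrix n n ℂ) (hρ : ∀ x, IsDensity (ρ x))
    (p : Fin m → ℝ) (hp : ∀ x, 0 ≤ p x) (hp1 : ∑ x, p x = 1)
    (α : ℝ) (hα : 1 < α) :
    ∑ x, p x * ((mpow (ρ x) α).trace.re) ^ (1 / α)
      ≤ (m : ℝ) ^ ((α - 1) / α) * ((mpow (∑ x, (p x : ℂ) • ρ x) α).trace.re) ^ (1 / α) :=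
  sum_trace_rpow_le_general ρ hρ p hp α hα
end

section
/- If σ^{AB} is a separable bipartite density matrix with marginal σ^A = Tr_B σ^{AB}, then σ^{AB} ≤ σ^A ⊗ I^B in the Loewner order. -/
open Matrix BigOperators Kronecker ComplexOrder

/-! A positive semidefinite `ω` satisfies `ω ≤ (tr ω) • 1`, its eigenvalues being nonnegative
with sum `tr ω`. Hence `τ ⊗ ω ≤ τ ⊗ (tr ω) • 1 = Tr_B (τ ⊗ ω) ⊗ 1` for positive semidefinite `τ`,
and since both sides are linear in the state, the inequality passes to nonnegative combinations
of product states. -/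

open scoped MatrixOrder

lemma Matrix.PosSemidef.le_trace_smul_one {𝕜 n : Type*} [RCLike 𝕜] [Fintype n] [DecidableEq n]
    {A : Matrix n n 𝕜} (hA : A.PosSemidef) : A ≤ A.trace • 1 := by
  have htrace : A.trace = ((∑ i, hA.1.eigenvalues i : ℝ) : 𝕜) := by
    rw [hA.1.trace_eq_sum_eigenvalues, RCLike.ofReal_sum]
  have hspec : ∀ x ∈ spectrum ℝ A, x ≤ ∑ i, hA.1.eigenvalues i := by
    rw [hA.1.spectrum_real_eq_range_eigenvalues]
    rintro _ ⟨i, rfl⟩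
    exact Finset.single_le_sum (fun j _ => hA.eigenvalues_nonneg j) (Finset.mem_univ i)
  rw [htrace, ← RCLike.real_smul_eq_coe_smul, ← Algebra.algebraMap_eq_smul_one]
  exact le_algebraMap_of_spectrum_le hspec

lemma Matrix.kronecker_le_kronecker_left {𝕜 m n : Type*} [RCLike 𝕜] [Fintype m] [Fintype n]
    {A : Matrix m m 𝕜} {B C : Matrix n n 𝕜} (hA : 0 ≤ A) (hBC : B ≤ C) :
    A ⊗ₖ B ≤ A ⊗ₖ C := by
  have hsub : A ⊗ₖ C - A ⊗ₖ B = A ⊗ₖ (C - B) := by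
    rw [sub_eq_iff_eq_add, ← kronecker_add, sub_add_cancel]
  rw [le_iff, hsub]
  exact hA.posSemidef.kronecker hBC

section PartialTrace

variable {a b : Type*} [Fintype a] [Fintype b]

noncomputable def ptraceBLinearMap : Matrix (a × b) (a × b) ℂ →ₗ[ℂ] Matrix a a ℂ where
  toFun := ptraceB
  map_add' M N := by ext i j; simp [ptraceB, Finset.sum_add_distrib]
  map_smul' c M := by ext i j; simp [ptraceB, Finset.mul_sum]

lemma ptraceB_kronecker (A : Matrix a a ℂ) (B : Matrix b b ℂ) :
    ptraceB (A ⊗ₖ B) = B.trace • A := by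
  ext i j
  simp [ptraceB, trace, Finset.mul_sum, mul_comm]

lemma kronecker_le_ptraceB_kronecker_one [DecidableEq b] {τ : Matrix a a ℂ} {ω : Matrix b b ℂ}
    (hτ : τ.PosSemidef) (hω : ω.PosSemidef) : τ ⊗ₖ ω ≤ ptraceB (τ ⊗ₖ ω) ⊗ₖ 1 := by
  rw [ptraceB_kronecker, smul_kronecker, ← kronecker_smul]
  exact Matrix.kronecker_le_kronecker_left hτ.nonneg hω.le_trace_smul_one

lemma sum_smul_le_ptraceB_kronecker_one [DecidableEq b] {ι : Type*} (s : Finset ι) {c : ι → ℂ}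
    {X : ι → Matrix (a × b) (a × b) ℂ} (hc : ∀ i ∈ s, 0 ≤ c i)
    (hX : ∀ i ∈ s, X i ≤ ptraceB (X i) ⊗ₖ 1) :
    ∑ i ∈ s, c i • X i ≤ ptraceB (∑ i ∈ s, c i • X i) ⊗ₖ 1 := by
  let L : Matrix (a × b) (a × b) ℂ →ₗ[ℂ] Matrix (a × b) (a × b) ℂ :=
    (kroneckerBilinear (R := ℂ)).flip 1 ∘ₗ ptraceBLinearMap
  change _ ≤ L _
  rw [map_sum]
  simp_rw [map_smul]
  exact Finset.sum_le_sum fun i hi => smul_le_smul_of_nonneg_left (hX i hi) (hc i hi)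

end PartialTrace

theorem separable_le_marginal_tensor_one_general {a b : Type*} [Fintype a] [Fintype b]
    [DecidableEq a] [DecidableEq b]
    (σ : Matrix (a × b) (a × b) ℂ) (hsep : IsSepState σ) :
    (ptraceB σ ⊗ₖ (1 : Matrix b b ℂ) - σ).PosSemidef := by
  obtain ⟨k, q, τ, ω, hq, -, hτ, hω, rfl⟩ := hsep
  rw [← le_iff]
  exact sum_smul_le_ptraceB_kronecker_one _ (fun i _ => Complex.zero_le_real.mpr (hq i))
    fun i _ => kronecker_le_ptraceB_kronecker_one (hτ i).1 (hω i).1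

theorem separable_le_marginal_tensor_one {a b : Type*} [Fintype a] [Fintype b]
    [DecidableEq a] [DecidableEq b]
    (σ : Matrix (a × b) (a × b) ℂ) (hσ : IsDensity σ) (hsep : IsSepState σ) :
    (ptraceB σ ⊗ₖ (1 : Matrix b b ℂ) - σ).PosSemidef :=
  separable_le_marginal_tensor_one_general σ hsep
end
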